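/- There exists a linear operator on π₃ which is a local derivation of π₃ but is not a derivation of π₃. -/
import Mathlib


noncomputable section

/-- The multiplication of the 5-dimensional naturally graded nilpotent associative
algebra `π₃`, given on the basis `e₁, …, e₅` (indices `0, …, 4`) by
`e₁e₁ = e₂`, `e₁e₂ = e₂e₁ = e₃`, `e₁e₄ = e₅`, `e₄e₄ = e₅`. -/
def pi3Mul (x y : Fin 5 → ℂ) : Fin 5 → ℂ :=
  ![0, x 0 * y 0, x 0 * y 1 + x 1 * y 0, 0, x 0 * y 3 + x 3 * y 3]

/-- A derivation of `π₃`: a linear operator satisfying the Leibniz rule. -/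
def IsPi3Der (D : (Fin 5 → ℂ) →ₗ[ℂ] (Fin 5 → ℂ)) : Prop :=
  ∀ x y, D (pi3Mul x y) = pi3Mul (D x) y + pi3Mul x (D y)

/-- A local derivation of `π₃`. -/
def IsPi3LocDer (f : (Fin 5 → ℂ) →ₗ[ℂ] (Fin 5 → ℂ)) : Prop :=
  ∀ x : Fin 5 → ℂ, ∃ D : (Fin 5 → ℂ) →ₗ[ℂ] (Fin 5 → ℂ), IsPi3Der D ∧ f x = D x

/-- A family of derivations of `π₃`. -/
def Dgen (b c d : ℂ) : (Fin 5 → ℂ) →ₗ[ℂ] (Fin 5 → ℂ) where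
  toFun x := ![0, b * x 0, 2 * b * x 1 + c * x 0 + d * x 3, 0, 0]
  map_add' x y := by
    funext i
    fin_cases i <;> simp [Matrix.cons_val_zero, Matrix.cons_val_one] <;> ring
  map_smul' r x := by
    funext i
    fin_cases i <;> simp [Matrix.cons_val_zero, Matrix.cons_val_one] <;> ring

lemma Dgen_der (b c d : ℂ) : IsPi3Der (Dgen b c d) := by
  intro x y
  funext i
  fin_cases i <;>
    simp [Dgen, pi3Mul, Matrix.cons_val_zero, Matrix.cons_val_one] <;> ring

/-- The candidate local derivation: `∇x = (0, 0, x₁, 0, 0)`. -/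
def nab : (Fin 5 → ℂ) →ₗ[ℂ] (Fin 5 → ℂ) where
  toFun x := ![0, 0, x 1, 0, 0]
  map_add' x y := by
    funext i
    fin_cases i <;> simp
  map_smul' r x := by
    funext i
    fin_cases i <;> simp

/-- There is a local derivation of `π₃` which is not a derivation. -/
theorem exists_pi3_locDer_not_der :
    ∃ f : (Fin 5 → ℂ) →ₗ[ℂ] (Fin 5 → ℂ), IsPi3LocDer f ∧ ¬ IsPi3Der f := by
  refine ⟨nab, ?_, ?_⟩
  · intro x
    by_cases h0 : x 0 = 0
    · by_cases h3 : x 3 = 0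
      · refine ⟨Dgen (1/2) 0 0, Dgen_der _ _ _, ?_⟩
        funext i
        fin_cases i <;> simp [nab, Dgen, h0, h3] <;> ring
      · refine ⟨Dgen 0 0 (x 1 / x 3), Dgen_der _ _ _, ?_⟩
        funext i
        fin_cases i <;> simp [nab, Dgen, h0] <;> field_simp
    · refine ⟨Dgen 0 (x 1 / x 0) 0, Dgen_der _ _ _, ?_⟩
      funext i
      fin_cases i <;> simp [nab, Dgen] <;> field_simp
  · intro h
    have := congrFun (h ![1,0,0,0,0] ![1,0,0,0,0]) 2
    simp [nab, pi3Mul] at this
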